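/- arXiv:2509.23743 — 2 statements merged into one kernel-verified Lean document; each statement's English description precedes it below -/
import Mathlib

section
/- A commutative ring A with unity is a quasi second ring (i.e., the A-module A satisfies: 0 ≠ bA ⊆ aA ≠ A implies bA = aA) if and only if either A is a local ring with maximal ideal m satisfying m² = 0, or A is isomorphic to a direct product of two fields. -/
/-- `R` is a quasi second ring: `0 ≠ (b) ⊆ (a) ≠ R` implies `(b) = (a)`. -/
def QuasiSecondRing (R : Type*) [CommRing R] : Prop :=
  ∀ a b : R, Ideal.span {b} ≠ ⊥ → Ideal.span {b} ≤ Ideal.span {a} → Ideal.span {a} ≠ ⊤ →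
    Ideal.span {b} = Ideal.span {a}

universe u

/-!
If `A` has an idempotent `e ≠ 0, 1`, then `A ≅ A/(e) × A/(1 - e)` with both factors nontrivial,
and in a quasi second product `R × S` the nonunit `(1, 0)` divides every `(x, 0)`, so each
`x ≠ 0` is invertible: both factors are fields. Otherwise, a nonunit `a` with `a² ≠ 0` would give
`a = a²c`, making `ac` a nontrivial idempotent; so nonunits square to zero, and then `a = abc`
forces `a = 0` whenever `ab ≠ 0`, because `1 - bc` is a unit. "Nonunits multiply to zero" is
exactly "local with `m² = 0`", and it gives the quasi second condition at once.
-/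

variable {R S : Type*} [CommRing R] [CommRing S]

theorem quasiSecondRing_iff_dvd :
    QuasiSecondRing R ↔ ∀ a b : R, b ≠ 0 → a ∣ b → ¬IsUnit a → b ∣ a := by
  refine forall₂_congr fun a b => ?_
  rw [le_antisymm_iff (a := Ideal.span {b}), ne_eq, ne_eq, Ideal.span_singleton_eq_bot,
    Ideal.span_singleton_eq_top, Ideal.span_singleton_le_span_singleton,
    Ideal.span_singleton_le_span_singleton]
  tauto

theorem QuasiSecondRing.of_ringEquiv (φ : R ≃+* S) (h : QuasiSecondRing S) :
    QuasiSecondRing R := by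
  rw [quasiSecondRing_iff_dvd] at h ⊢
  intro a b hb hab ha
  simpa using map_dvd φ.symm
    (h (φ a) (φ b) (by simpa using hb) (map_dvd φ hab) (by rwa [isUnit_map_iff]))

theorem QuasiSecondRing.isField_fst [Nontrivial R] [Nontrivial S]
    (h : QuasiSecondRing (R × S)) : IsField R := by
  rw [quasiSecondRing_iff_dvd] at h
  refine ⟨exists_pair_ne R, mul_comm, fun {x} hx => ?_⟩
  have hx₀ : ((x, 0) : R × S) ≠ 0 := fun h₀ => hx (congrArg Prod.fst h₀)
  have hdvd : ((1, 0) : R × S) ∣ (x, 0) := ⟨(x, 0), by simp⟩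
  have hunit : ¬IsUnit ((1, 0) : R × S) := fun hu => not_isUnit_zero (Prod.isUnit_iff.1 hu).2
  obtain ⟨c, hc⟩ := h _ _ hx₀ hdvd hunit
  exact ⟨c.1, (congrArg Prod.fst hc).symm⟩

theorem QuasiSecondRing.isField_snd [Nontrivial R] [Nontrivial S]
    (h : QuasiSecondRing (R × S)) : IsField S :=
  (h.of_ringEquiv (RingEquiv.prodComm : S × R ≃+* R × S)).isField_fst

theorem quasiSecondRing_prod {K L : Type*} [Field K] [Field L] : QuasiSecondRing (K × L) := by
  rw [quasiSecondRing_iff_dvd]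
  rintro ⟨a₁, a₂⟩ ⟨b₁, b₂⟩ hb ⟨⟨c₁, c₂⟩, hc⟩ ha
  simp only [Prod.mk_mul_mk, Prod.mk.injEq] at hc
  obtain ⟨rfl, rfl⟩ := hc
  have ha' : a₁ = 0 ∨ a₂ = 0 := by
    by_contra! h
    exact ha (Prod.isUnit_iff.2 ⟨h.1.isUnit, h.2.isUnit⟩)
  rcases ha' with rfl | rfl
  · have hb₂ : a₂ * c₂ ≠ 0 := fun h => hb (by simp [h])
    exact ⟨(0, c₂⁻¹), by simp [right_ne_zero_of_mul hb₂]⟩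
  · have hb₁ : a₁ * c₁ ≠ 0 := fun h => hb (by simp [h])
    exact ⟨(c₁⁻¹, 0), by simp [right_ne_zero_of_mul hb₁]⟩

theorem IsIdempotentElem.span_singleton_ne_top {e : R} (he : IsIdempotentElem e) (he₁ : e ≠ 1) :
    Ideal.span {e} ≠ ⊤ := by
  rw [ne_eq, Ideal.span_singleton_eq_top]
  exact fun hu => he₁ ((IsIdempotentElem.iff_eq_one_of_isUnit hu).1 he)

theorem QuasiSecondRing.exists_ringEquiv_prod_field {R : Type u} [CommRing R]
    (h : QuasiSecondRing R) {e : R} (he : IsIdempotentElem e) (he₀ : e ≠ 0) (he₁ : e ≠ 1) :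
    ∃ (F₁ F₂ : Type u) (_ : Field F₁) (_ : Field F₂), Nonempty (R ≃+* F₁ × F₂) := by
  let φ : R ≃+* (R ⧸ Ideal.span {e}) × (R ⧸ Ideal.span {1 - e}) :=
    (AlgEquiv.prodQuotientOfIsIdempotentElem (R := R) he he.one_sub (by ring)
      (by rw [mul_sub, mul_one, he.eq, sub_self])).toRingEquiv
  have : Nontrivial (R ⧸ Ideal.span {e}) :=
    Ideal.Quotient.nontrivial_iff.2 (he.span_singleton_ne_top he₁)
  have : Nontrivial (R ⧸ Ideal.span {1 - e}) :=
    Ideal.Quotient.nontrivial_iff.2 (he.one_sub.span_singleton_ne_top (by simpa using he₀))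
  have hφ := h.of_ringEquiv φ.symm
  exact ⟨_, _, hφ.isField_fst.toField, hφ.isField_snd.toField, ⟨φ⟩⟩

section NoIdempotents

variable (h : QuasiSecondRing R) (hidem : ∀ e : R, IsIdempotentElem e → e = 0 ∨ e = 1)
include h hidem

theorem QuasiSecondRing.mul_self_eq_zero {a : R} (ha : ¬IsUnit a) : a * a = 0 := by
  rw [quasiSecondRing_iff_dvd] at h
  by_contra haa
  obtain ⟨c, hc⟩ := h a (a * a) haa (dvd_mul_right a a) ha
  have hac : IsIdempotentElem (a * c) := by
    rw [IsIdempotentElem]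
    linear_combination c * hc.symm
  rcases hidem _ hac with hac₀ | hac₁
  · have ha₀ : a = 0 := by linear_combination hc + a * hac₀
    exact haa (by rw [ha₀, zero_mul])
  · exact ha (.of_mul_eq_one c hac₁)

theorem QuasiSecondRing.mul_eq_zero_of_not_isUnit {a b : R} (ha : ¬IsUnit a) (hb : ¬IsUnit b) :
    a * b = 0 := by
  have hsq := h.mul_self_eq_zero hidem hb
  rw [quasiSecondRing_iff_dvd] at h
  by_contra hab
  obtain ⟨c, hc⟩ := h a (a * b) hab (dvd_mul_right a b) ha
  have hunit : IsUnit (1 - b * c) :=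
    IsNilpotent.isUnit_one_sub ⟨2, by linear_combination (c * c) * hsq⟩
  have ha₀ : a * (1 - b * c) = 0 := by linear_combination hc
  exact hab (by rw [hunit.mul_left_eq_zero.1 ha₀, zero_mul])

end NoIdempotents

section NonunitsMulEqZero

variable (h : ∀ a b : R, ¬IsUnit a → ¬IsUnit b → a * b = 0)
include h

theorem quasiSecondRing_of_mul_eq_zero : QuasiSecondRing R := by
  rw [quasiSecondRing_iff_dvd]
  rintro a b hb ⟨c, rfl⟩ ha
  have hc : IsUnit c := by_contra fun hc => hb (h a c ha hc)
  exact hc.mul_right_dvd.2 dvd_rfl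

theorem isLocalRing_of_mul_eq_zero [Nontrivial R] : IsLocalRing R :=
  IsLocalRing.of_nonunits_add fun a b ha hb =>
    ((Commute.all a b).isNilpotent_add ⟨2, by rw [sq]; exact h a a ha ha⟩
      ⟨2, by rw [sq]; exact h b b hb hb⟩).not_isUnit

theorem maximalIdeal_sq_eq_bot_of_mul_eq_zero [IsLocalRing R] :
    IsLocalRing.maximalIdeal R ^ 2 = ⊥ := by
  rw [sq, ← le_bot_iff, Ideal.mul_le]
  intro r hr s hs
  rw [h r s hr hs]
  exact Submodule.zero_mem _

end NonunitsMulEqZero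

theorem mul_eq_zero_of_not_isUnit_of_sq_eq_bot {m : Ideal R}
    (hm : ∀ I : Ideal R, I.IsMaximal → I = m) (hm₂ : m ^ 2 = ⊥) {a b : R} (ha : ¬IsUnit a)
    (hb : ¬IsUnit b) : a * b = 0 := by
  obtain ⟨I, hI, haI⟩ := exists_max_ideal_of_mem_nonunits ha
  obtain ⟨J, hJ, hbJ⟩ := exists_max_ideal_of_mem_nonunits hb
  rw [hm I hI] at haI
  rw [hm J hJ] at hbJ
  simpa [← Ideal.mem_bot, ← hm₂, sq] using Ideal.mul_mem_mul haI hbJ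

theorem stmt16 (A : Type u) [CommRing A] [Nontrivial A] :
    QuasiSecondRing A ↔
    ((∃ m : Ideal A, m.IsMaximal ∧ (∀ I : Ideal A, I.IsMaximal → I = m) ∧ m ^ 2 = ⊥) ∨
      ∃ (F₁ F₂ : Type u) (_ : Field F₁) (_ : Field F₂), Nonempty (A ≃+* F₁ × F₂)) := by
  refine ⟨fun h => ?_, ?_⟩
  · by_cases hidem : ∀ e : A, IsIdempotentElem e → e = 0 ∨ e = 1
    · have hmul : ∀ a b : A, ¬IsUnit a → ¬IsUnit b → a * b = 0 :=
        fun a b => h.mul_eq_zero_of_not_isUnit hidem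
      have := isLocalRing_of_mul_eq_zero hmul
      exact .inl ⟨_, IsLocalRing.maximalIdeal.isMaximal A,
        fun I hI => IsLocalRing.eq_maximalIdeal hI, maximalIdeal_sq_eq_bot_of_mul_eq_zero hmul⟩
    · push Not at hidem
      obtain ⟨e, he, he₀, he₁⟩ := hidem
      exact .inr (h.exists_ringEquiv_prod_field he he₀ he₁)
  · rintro (⟨m, -, hm, hm₂⟩ | ⟨F₁, F₂, _, _, ⟨φ⟩⟩)
    · exact quasiSecondRing_of_mul_eq_zero fun a b => mul_eq_zero_of_not_isUnit_of_sq_eq_bot hm hm₂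
    · exact quasiSecondRing_prod.of_ringEquiv φ
end

section
/- Let E be an A-module over a commutative ring A. If A is a field, then the idealization A(+)E (the ring A × E with multiplication (a₁,m₁)(a₂,m₂) = (a₁a₂, a₁m₂ + a₂m₁)) is a quasi second ring. -/
/-- If `b = a c ≠ 0` with `a` a nonunit, then `c` is a unit, so `(b) = (a)`. -/
theorem quasiSecondRing_of_mul_eq_zero_of_not_isUnit {R : Type*} [CommRing R]
    (h : ∀ x y : R, ¬IsUnit x → ¬IsUnit y → x * y = 0) : QuasiSecondRing R := by
  intro a b hb hle ha
  rw [Ne, Ideal.span_singleton_eq_bot] at hb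
  rw [Ne, Ideal.span_singleton_eq_top] at ha
  obtain ⟨c, rfl⟩ := Ideal.span_singleton_le_span_singleton.mp hle
  have hc : IsUnit c := by
    by_contra hc
    exact hb (h a c ha hc)
  exact Ideal.span_singleton_mul_right_unit hc a

namespace TrivSqZeroExt

theorem mul_eq_zero_of_fst_eq_zero {R M : Type*} [Semiring R] [AddCommMonoid M] [Module R M]
    [Module Rᵐᵒᵖ M] {x y : TrivSqZeroExt R M} (hx : x.fst = 0) (hy : y.fst = 0) : x * y = 0 := by
  ext <;> simp [hx, hy]

theorem mul_eq_zero_of_not_isUnit {K M : Type*} [DivisionRing K] [AddCommGroup M] [Module K M]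
    [Module Kᵐᵒᵖ M] [SMulCommClass K Kᵐᵒᵖ M] {x y : TrivSqZeroExt K M}
    (hx : ¬IsUnit x) (hy : ¬IsUnit y) : x * y = 0 := by
  rw [isUnit_iff_isUnit_fst, isUnit_iff_ne_zero, not_not] at hx hy
  exact mul_eq_zero_of_fst_eq_zero hx hy

end TrivSqZeroExt

theorem stmt17 (A : Type*) [Field A] (E : Type*) [AddCommGroup E] [Module A E]
    [Module Aᵐᵒᵖ E] [IsCentralScalar A E] :
    QuasiSecondRing (TrivSqZeroExt A E) :=
  quasiSecondRing_of_mul_eq_zero_of_not_isUnit fun _ _ ↦ TrivSqZeroExt.mul_eq_zero_of_not_isUnit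
end
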